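/- Let (n_t)_{t≥0} be a family of finite positive Borel measures on S × ℝ₊, continuous in t for the bounded Lipschitz norm, satisfying the nonlinear weak formulation: for all f ∈ C_b^{1,0,1} and all t ≥ 0, ∫ f(t,x,a) n_t(dx,da) = ∫ f(0,x,a) n_0(dx,da) + ∫₀ᵗ ∫ (∂_s f(s,x,a) + ∂_a f(s,x,a) − (D(x,a) + c·n_s(S×ℝ₊)) f(s,x,a) + G[f(s,·,·)](x,a)) n_s(dx,da) ds. Set ρ(t) = n_t(S×ℝ₊) and define v_t := exp(c ∫₀ᵗ ρ(s) ds) · n_t. Then (v_t)_{t≥0} satisfies the linear weak formulation: for all f ∈ C_b^{1,0,1} and all t ≥ 0, ∫ f(t,x,a) v_t(dx,da) = ∫ f(0,x,a) v_0(dx,da) + ∫₀ᵗ ∫ (∂_s f(s,x,a) + ∂_a f(s,x,a) − D(x,a) f(s,x,a) + G[f(s,·,·)](x,a)) v_s(dx,da) ds, with v_0 = n_0. -/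

import Mathlib

open MeasureTheory Filter Topology Set

/-!
Testing the nonlinear weak formulation against `E(s) f(s,x,a)`, where `E(s) = exp (c ∫₀ˢ ρ)`
solves `E' = c ρ E`, the extra term `E' f` cancels the nonlinear loss `-c ρ E f`; what remains is
the linear weak formulation for `v = E • n`. Test functions must be `C¹` and bounded on all of
`ℝ₊`, so `E` is used only on `[0, t]` and continued beyond `t` by a saturating exponential tail
with the same value and slope at `t`.
-/

/-- G[g](x,a) = B(x,a)((1−p) g(x,0) + p ∫_S g(y,0) k(x,a,y) dy). -/
noncomputable def Gfun {d : ℕ} (S : Set (EuclideanSpace ℝ (Fin d)))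
    (B : EuclideanSpace ℝ (Fin d) → ℝ → ℝ)
    (k : EuclideanSpace ℝ (Fin d) → ℝ → EuclideanSpace ℝ (Fin d) → ℝ) (p : ℝ)
    (g : EuclideanSpace ℝ (Fin d) → ℝ → ℝ) (x : EuclideanSpace ℝ (Fin d)) (a : ℝ) : ℝ :=
  B x a * ((1 - p) * g x 0 + p * ∫ y in S, g y 0 * k x a y)

/-- f belongs to C_b^{1,0,1}(ℝ₊×S×ℝ₊) with ∂ₜf = fs and ∂ₐf = fa: f is continuous and
bounded, and its partial derivatives in the time and age variables exist, equal fs and fa,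
and are continuous and bounded. -/
def MemCb101 {d : ℕ} (S : Set (EuclideanSpace ℝ (Fin d)))
    (f fs fa : ℝ → EuclideanSpace ℝ (Fin d) → ℝ → ℝ) : Prop :=
  ContinuousOn (fun q : ℝ × EuclideanSpace ℝ (Fin d) × ℝ => f q.1 q.2.1 q.2.2)
    (Set.Ici 0 ×ˢ S ×ˢ Set.Ici 0) ∧
  (∃ C, ∀ t ∈ Set.Ici (0:ℝ), ∀ x ∈ S, ∀ a ∈ Set.Ici (0:ℝ), |f t x a| ≤ C) ∧
  (∀ t ∈ Set.Ici (0:ℝ), ∀ x ∈ S, ∀ a ∈ Set.Ici (0:ℝ),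
    HasDerivAt (fun s => f s x a) (fs t x a) t) ∧
  (∀ t ∈ Set.Ici (0:ℝ), ∀ x ∈ S, ∀ a ∈ Set.Ici (0:ℝ),
    HasDerivAt (fun b => f t x b) (fa t x a) a) ∧
  ContinuousOn (fun q : ℝ × EuclideanSpace ℝ (Fin d) × ℝ => fs q.1 q.2.1 q.2.2)
    (Set.Ici 0 ×ˢ S ×ˢ Set.Ici 0) ∧
  (∃ C, ∀ t ∈ Set.Ici (0:ℝ), ∀ x ∈ S, ∀ a ∈ Set.Ici (0:ℝ), |fs t x a| ≤ C) ∧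
  ContinuousOn (fun q : ℝ × EuclideanSpace ℝ (Fin d) × ℝ => fa q.1 q.2.1 q.2.2)
    (Set.Ici 0 ×ˢ S ×ˢ Set.Ici 0) ∧
  (∃ C, ∀ t ∈ Set.Ici (0:ℝ), ∀ x ∈ S, ∀ a ∈ Set.Ici (0:ℝ), |fa t x a| ≤ C)

theorem hasDerivAt_ite_le {F : Type*} [NormedAddCommGroup F] [NormedSpace ℝ F]
    {f g f' g' : ℝ → F} {t : ℝ} (hf : ∀ s, HasDerivAt f (f' s) s)
    (hg : ∀ s, HasDerivAt g (g' s) s) (hfg : f t = g t) (hfg' : f' t = g' t) (s : ℝ) :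
    HasDerivAt (fun u => if u ≤ t then f u else g u) (if s ≤ t then f' s else g' s) s := by
  rcases lt_trichotomy s t with hst | rfl | hst
  · refine (if_pos hst.le).symm ▸ (hf s).congr_of_eventuallyEq ?_
    filter_upwards [Iio_mem_nhds hst] with u hu
    exact if_pos (le_of_lt hu)
  · have hleft : HasDerivWithinAt (fun u => if u ≤ s then f u else g u) (f' s) (Iic s) s :=
      (hf s).hasDerivWithinAt.congr (fun u hu => if_pos hu) (if_pos le_rfl)
    have hright : HasDerivWithinAt (fun u => if u ≤ s then f u else g u) (f' s) (Ici s) s := by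
      refine (hfg' ▸ (hg s).hasDerivWithinAt).congr (fun u hu => ?_) (by simp [hfg])
      rcases (mem_Ici.mp hu).eq_or_lt with rfl | hlt
      · simp [hfg]
      · exact if_neg (not_le.mpr hlt)
    simpa [Iic_union_Ici] using hleft.union hright
  · refine (if_neg (not_le.mpr hst)).symm ▸ (hg s).congr_of_eventuallyEq ?_
    filter_upwards [Ioi_mem_nhds hst] with u hu
    exact if_neg (not_le.mpr hu)

theorem Continuous.exists_abs_le_on_Ici {g : ℝ → ℝ} (hg : Continuous g) {t M : ℝ}
    (htail : ∀ s, t < s → |g s| ≤ M) (a : ℝ) : ∃ C, ∀ s ∈ Ici a, |g s| ≤ C := by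
  obtain ⟨C, hC⟩ :=
    (isCompact_Icc (a := a) (b := t)).exists_bound_of_continuousOn hg.continuousOn
  refine ⟨max C M, fun s hs => ?_⟩
  rcases le_or_gt s t with hst | hst
  · exact (hC s ⟨hs, hst⟩).trans (le_max_left _ _)
  · exact (htail s hst).trans (le_max_right _ _)

noncomputable def expExtend (E E' : ℝ → ℝ) (t s : ℝ) : ℝ :=
  if s ≤ t then E s else E t + E' t * (1 - Real.exp (t - s))

noncomputable def expExtendDeriv (E' : ℝ → ℝ) (t s : ℝ) : ℝ :=
  if s ≤ t then E' s else E' t * Real.exp (t - s)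

section expExtend

variable {E E' : ℝ → ℝ} {t s : ℝ}

theorem expExtend_of_le (h : s ≤ t) : expExtend E E' t s = E s := if_pos h

theorem expExtendDeriv_of_le (h : s ≤ t) : expExtendDeriv E' t s = E' s := if_pos h

theorem hasDerivAt_expExtend (hE : ∀ s, HasDerivAt E (E' s) s) (s : ℝ) :
    HasDerivAt (expExtend E E' t) (expExtendDeriv E' t s) s := by
  have htail (u : ℝ) : HasDerivAt (fun s => E t + E' t * (1 - Real.exp (t - s)))
      (E' t * Real.exp (t - u)) u := by
    exact ((((hasDerivAt_id u).const_sub t).exp.const_sub 1).const_mul (E' t)).const_add (E t)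
      |>.congr_deriv (by simp)
  exact hasDerivAt_ite_le hE htail (by simp) (by simp) s

theorem continuous_expExtend (hE : Continuous E) : Continuous (expExtend E E' t) :=
  Continuous.if_le hE (by fun_prop) continuous_id continuous_const (fun s hs => by simp [hs])

theorem continuous_expExtendDeriv (hE' : Continuous E') : Continuous (expExtendDeriv E' t) :=
  Continuous.if_le hE' (by fun_prop) continuous_id continuous_const (fun s hs => by simp [hs])

theorem exists_abs_expExtend_le (hE : Continuous E) (a : ℝ) :
    ∃ C, ∀ s ∈ Ici a, |expExtend E E' t s| ≤ C := by
  refine (continuous_expExtend hE).exists_abs_le_on_Ici (t := t) (M := |E t| + |E' t|)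
    (fun s (hs : t < s) => ?_) a
  have h0 : 0 < Real.exp (t - s) := Real.exp_pos _
  have h1 : Real.exp (t - s) ≤ 1 := Real.exp_le_one_iff.mpr (by linarith)
  rw [expExtend, if_neg (not_le.mpr hs)]
  calc |E t + E' t * (1 - Real.exp (t - s))| ≤ |E t| + |E' t| * |1 - Real.exp (t - s)| := by
        rw [← abs_mul]; exact abs_add_le _ _
    _ ≤ |E t| + |E' t| * 1 := by
        gcongr; rw [abs_of_nonneg (by linarith)]; linarith
    _ = |E t| + |E' t| := by rw [mul_one]

theorem exists_abs_expExtendDeriv_le (hE' : Continuous E') (a : ℝ) :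
    ∃ C, ∀ s ∈ Ici a, |expExtendDeriv E' t s| ≤ C := by
  refine (continuous_expExtendDeriv hE').exists_abs_le_on_Ici (t := t) (M := |E' t|)
    (fun s (hs : t < s) => ?_) a
  rw [expExtendDeriv, if_neg (not_le.mpr hs), abs_mul, Real.abs_exp]
  exact mul_le_of_le_one_right (abs_nonneg _) (Real.exp_le_one_iff.mpr (by linarith))

end expExtend

theorem Gfun_const_mul {d : ℕ} (S : Set (EuclideanSpace ℝ (Fin d)))
    (B : EuclideanSpace ℝ (Fin d) → ℝ → ℝ)
    (k : EuclideanSpace ℝ (Fin d) → ℝ → EuclideanSpace ℝ (Fin d) → ℝ) (p r : ℝ)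
    (g : EuclideanSpace ℝ (Fin d) → ℝ → ℝ) (x : EuclideanSpace ℝ (Fin d)) (a : ℝ) :
    Gfun S B k p (fun y b => r * g y b) x a = r * Gfun S B k p g x a := by
  simp only [Gfun, mul_assoc, integral_const_mul]
  ring

theorem MemCb101.time_mul {d : ℕ} {S : Set (EuclideanSpace ℝ (Fin d))}
    {f fs fa : ℝ → EuclideanSpace ℝ (Fin d) → ℝ → ℝ} (hf : MemCb101 S f fs fa)
    {e e' : ℝ → ℝ} (he : ∀ s, HasDerivAt e (e' s) s) (he' : Continuous e')
    (he_bdd : ∃ C, ∀ s ∈ Ici (0:ℝ), |e s| ≤ C) (he'_bdd : ∃ C, ∀ s ∈ Ici (0:ℝ), |e' s| ≤ C) :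
    MemCb101 S (fun s x a => e s * f s x a) (fun s x a => e' s * f s x a + e s * fs s x a)
      (fun s x a => e s * fa s x a) := by
  obtain ⟨hfc, ⟨Cf, hCf⟩, hfs, hfa, hfsc, ⟨Cfs, hCfs⟩, hfac, ⟨Cfa, hCfa⟩⟩ := hf
  obtain ⟨Ce, hCe⟩ := he_bdd
  obtain ⟨Ce', hCe'⟩ := he'_bdd
  have hec : ContinuousOn (fun q : ℝ × EuclideanSpace ℝ (Fin d) × ℝ => e q.1)
      (Ici 0 ×ˢ S ×ˢ Ici 0) :=
    ((continuous_iff_continuousAt.mpr fun s => (he s).continuousAt).comp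
      continuous_fst).continuousOn
  have hmul_le {u v U V : ℝ} (hu : |u| ≤ U) (hv : |v| ≤ V) : |u * v| ≤ U * V := by
    rw [abs_mul]; exact mul_le_mul hu hv (abs_nonneg _) ((abs_nonneg _).trans hu)
  refine ⟨hec.mul hfc, ⟨Ce * Cf, fun s hs x hx a ha => hmul_le (hCe s hs) (hCf s hs x hx a ha)⟩,
    fun s hs x hx a ha => (he s).mul (hfs s hs x hx a ha),
    fun s hs x hx a ha => (hfa s hs x hx a ha).const_mul (e s),
    ((he'.comp continuous_fst).continuousOn.mul hfc).add (hec.mul hfsc),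
    ⟨Ce' * Cf + Ce * Cfs, fun s hs x hx a ha => (abs_add_le _ _).trans
      (add_le_add (hmul_le (hCe' s hs) (hCf s hs x hx a ha))
        (hmul_le (hCe s hs) (hCfs s hs x hx a ha)))⟩,
    hec.mul hfac, ⟨Ce * Cfa, fun s hs x hx a ha => hmul_le (hCe s hs) (hCfa s hs x hx a ha)⟩⟩

theorem hasDerivAt_exp_mul_integral {ρ : ℝ → ℝ} (hρ : Continuous ρ) (c s : ℝ) :
    HasDerivAt (fun u => Real.exp (c * ∫ r in (0:ℝ)..u, ρ r))
      (c * ρ s * Real.exp (c * ∫ r in (0:ℝ)..s, ρ r)) s := by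
  have hI := hρ.integral_hasStrictDerivAt 0 s |>.hasDerivAt
  exact ((hI.const_mul c).exp).congr_deriv (by ring)

theorem stmt19_general {d : ℕ}
    (S : Set (EuclideanSpace ℝ (Fin d)))
    (B D : EuclideanSpace ℝ (Fin d) → ℝ → ℝ)
    (k : EuclideanSpace ℝ (Fin d) → ℝ → EuclideanSpace ℝ (Fin d) → ℝ)
    (p : ℝ)
    (c : ℝ)
    (n : ℝ → Measure (EuclideanSpace ℝ (Fin d) × ℝ))
    (hBL : ∀ g : EuclideanSpace ℝ (Fin d) × ℝ → ℝ, (∃ C : NNReal, LipschitzWith C g) →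
      (∃ C, ∀ q, |g q| ≤ C) → Continuous (fun t => ∫ q, g q ∂(n t)))
    (hweak : ∀ f fs fa : ℝ → EuclideanSpace ℝ (Fin d) → ℝ → ℝ, MemCb101 S f fs fa →
      ∀ t : ℝ, 0 ≤ t →
        ∫ q : EuclideanSpace ℝ (Fin d) × ℝ, f t q.1 q.2 ∂(n t) =
          (∫ q : EuclideanSpace ℝ (Fin d) × ℝ, f 0 q.1 q.2 ∂(n 0)) +
          ∫ s in (0:ℝ)..t, (∫ q : EuclideanSpace ℝ (Fin d) × ℝ,
            (fs s q.1 q.2 + fa s q.1 q.2 -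
              (D q.1 q.2 + c * ((n s) Set.univ).toReal) * f s q.1 q.2 +
              Gfun S B k p (f s) q.1 q.2) ∂(n s))) :
    ∀ v : ℝ → Measure (EuclideanSpace ℝ (Fin d) × ℝ),
      (∀ t, v t = ENNReal.ofReal
          (Real.exp (c * ∫ s in (0:ℝ)..t, ((n s) Set.univ).toReal)) • n t) →
      v 0 = n 0 ∧
      (∀ f fs fa : ℝ → EuclideanSpace ℝ (Fin d) → ℝ → ℝ, MemCb101 S f fs fa →
        ∀ t : ℝ, 0 ≤ t →
          ∫ q : EuclideanSpace ℝ (Fin d) × ℝ, f t q.1 q.2 ∂(v t) =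
            (∫ q : EuclideanSpace ℝ (Fin d) × ℝ, f 0 q.1 q.2 ∂(v 0)) +
            ∫ s in (0:ℝ)..t, (∫ q : EuclideanSpace ℝ (Fin d) × ℝ,
              (fs s q.1 q.2 + fa s q.1 q.2 - D q.1 q.2 * f s q.1 q.2 +
                Gfun S B k p (f s) q.1 q.2) ∂(v s))) := by
  intro v hv
  set ρ : ℝ → ℝ := fun s => ((n s) Set.univ).toReal
  have hρ : Continuous ρ := by
    simpa [integral_const, ρ, Measure.real] using
      hBL (fun _ => 1) ⟨0, LipschitzWith.const 1⟩ ⟨1, fun _ => by simp⟩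
  set E : ℝ → ℝ := fun s => Real.exp (c * ∫ r in (0:ℝ)..s, ρ r)
  have hE : ∀ s, HasDerivAt E (c * ρ s * E s) s := hasDerivAt_exp_mul_integral hρ c
  have hEc : Continuous E := continuous_iff_continuousAt.mpr fun s => (hE s).continuousAt
  have hv_int (s : ℝ) (g : EuclideanSpace ℝ (Fin d) × ℝ → ℝ) :
      ∫ q, g q ∂(v s) = E s * ∫ q, g q ∂(n s) := by
    rw [hv s, integral_smul_measure, ENNReal.toReal_ofReal (Real.exp_nonneg _), smul_eq_mul]
  have hv0 : v 0 = n 0 := by simpa using hv 0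
  refine ⟨hv0, fun f fs fa hf t ht => ?_⟩
  -- Test against `e(s) f(s,x,a)` with `e = E` on `[0, t]`; there `e' f = c ρ e f` cancels.
  have hweighted := hweak _ _ _ (hf.time_mul (hasDerivAt_expExtend (t := t) hE)
    (continuous_expExtendDeriv (by fun_prop)) (exists_abs_expExtend_le hEc 0)
    (exists_abs_expExtendDeriv_le (by fun_prop) 0)) t ht
  simp only [Gfun_const_mul, expExtend_of_le le_rfl, expExtend_of_le ht, integral_const_mul]
    at hweighted
  rw [hv_int, hv_int, hweighted]
  congr 1
  refine intervalIntegral.integral_congr fun s hs => ?_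
  rw [uIcc_of_le ht] at hs
  simp only [hv_int, ← integral_const_mul, expExtend_of_le hs.2, expExtendDeriv_of_le hs.2]
  congr 1 with q
  ring

/-- If (n_t) is a weak measure solution of the nonlinear equation, then
v_t = exp(c∫₀ᵗ ρ(s)ds)·n_t, with ρ(t) = n_t(S×ℝ₊), is a weak solution of the linear
equation, with v₀ = n₀. -/
theorem stmt19 {d : ℕ}
    (Ω S : Set (EuclideanSpace ℝ (Fin d)))
    (hΩne : Ω.Nonempty) (hΩopen : IsOpen Ω) (hΩbdd : Bornology.IsBounded Ω)
    (hΩconn : IsConnected Ω) (hSdef : S = closure Ω) (hScomp : IsCompact S)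
    (B D : EuclideanSpace ℝ (Fin d) → ℝ → ℝ)
    (hBcont : ContinuousOn (fun q : EuclideanSpace ℝ (Fin d) × ℝ => B q.1 q.2)
      (S ×ˢ Set.Ici 0))
    (hBbd : ∃ C, ∀ x ∈ S, ∀ a ∈ Set.Ici (0:ℝ), B x a ≤ C)
    (hBnn : ∀ x ∈ S, ∀ a ∈ Set.Ici (0:ℝ), 0 ≤ B x a)
    (Dlow : ℝ) (hDlow : 0 < Dlow)
    (hDcont : ContinuousOn (fun q : EuclideanSpace ℝ (Fin d) × ℝ => D q.1 q.2)
      (S ×ˢ Set.Ici 0))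
    (hDbd : ∃ C, ∀ x ∈ S, ∀ a ∈ Set.Ici (0:ℝ), D x a ≤ C)
    (hDlb : ∀ x ∈ S, ∀ a ∈ Set.Ici (0:ℝ), Dlow ≤ D x a)
    (k : EuclideanSpace ℝ (Fin d) → ℝ → EuclideanSpace ℝ (Fin d) → ℝ)
    (hkcont : ContinuousOn
      (fun q : EuclideanSpace ℝ (Fin d) × ℝ × EuclideanSpace ℝ (Fin d) => k q.1 q.2.1 q.2.2)
      (S ×ˢ (Set.Ici 0 ×ˢ S)))
    (hkbd : ∃ C, ∀ x ∈ S, ∀ a ∈ Set.Ici (0:ℝ), ∀ y ∈ S, k x a y ≤ C)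
    (hknn : ∀ x ∈ S, ∀ a ∈ Set.Ici (0:ℝ), ∀ y ∈ S, 0 ≤ k x a y)
    (p : ℝ) (hp : p ∈ Set.Ioo (0:ℝ) 1)
    (c : ℝ) (hc : 0 < c)
    (n : ℝ → Measure (EuclideanSpace ℝ (Fin d) × ℝ))
    (hnfin : ∀ t, IsFiniteMeasure (n t))
    (hnconc : ∀ t, n t (S ×ˢ Set.Ici 0)ᶜ = 0)
    (hBL : ∀ g : EuclideanSpace ℝ (Fin d) × ℝ → ℝ, (∃ C : NNReal, LipschitzWith C g) →
      (∃ C, ∀ q, |g q| ≤ C) → Continuous (fun t => ∫ q, g q ∂(n t)))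
    (hweak : ∀ f fs fa : ℝ → EuclideanSpace ℝ (Fin d) → ℝ → ℝ, MemCb101 S f fs fa →
      ∀ t : ℝ, 0 ≤ t →
        ∫ q : EuclideanSpace ℝ (Fin d) × ℝ, f t q.1 q.2 ∂(n t) =
          (∫ q : EuclideanSpace ℝ (Fin d) × ℝ, f 0 q.1 q.2 ∂(n 0)) +
          ∫ s in (0:ℝ)..t, (∫ q : EuclideanSpace ℝ (Fin d) × ℝ,
            (fs s q.1 q.2 + fa s q.1 q.2 -
              (D q.1 q.2 + c * ((n s) Set.univ).toReal) * f s q.1 q.2 +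
              Gfun S B k p (f s) q.1 q.2) ∂(n s))) :
    ∀ v : ℝ → Measure (EuclideanSpace ℝ (Fin d) × ℝ),
      (∀ t, v t = ENNReal.ofReal
          (Real.exp (c * ∫ s in (0:ℝ)..t, ((n s) Set.univ).toReal)) • n t) →
      v 0 = n 0 ∧
      (∀ f fs fa : ℝ → EuclideanSpace ℝ (Fin d) → ℝ → ℝ, MemCb101 S f fs fa →
        ∀ t : ℝ, 0 ≤ t →
          ∫ q : EuclideanSpace ℝ (Fin d) × ℝ, f t q.1 q.2 ∂(v t) =
            (∫ q : EuclideanSpace ℝ (Fin d) × ℝ, f 0 q.1 q.2 ∂(v 0)) +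
            ∫ s in (0:ℝ)..t, (∫ q : EuclideanSpace ℝ (Fin d) × ℝ,
              (fs s q.1 q.2 + fa s q.1 q.2 - D q.1 q.2 * f s q.1 q.2 +
                Gfun S B k p (f s) q.1 q.2) ∂(v s))) :=
  stmt19_general S B D k p c n hBL hweak
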